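/- arXiv:2403.16797 — 6 statements merged into one kernel-verified Lean document; each statement's English description precedes it below -/
import Mathlib

section
/- Let X be an n×n symmetric positive semidefinite real matrix and let K = X Cᵀ (C X Cᵀ + R)⁻¹ be its Kalman gain. Then for every n×q real matrix K̂ one has (I − K C) X ≤ (I − K̂ C) X (I − K̂ C)ᵀ + K̂ R K̂ᵀ in the Loewner order; that is, the Kalman gain minimizes the updated error covariance (I − K̂ C) X (I − K̂ C)ᵀ + K̂ R K̂ᵀ over all gains K̂. -/
/-!
Completing the square: with the innovation covariance `S = C X Cᵀ + R` and the gain `K`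
satisfying `K S = X Cᵀ`, the updated covariance of an arbitrary gain `L` exceeds `(1 - K C) X`
by exactly `(L - K) S (L - K)ᵀ`, which is positive semidefinite because `S` is positive definite.
-/

open Matrix

namespace Matrix

variable {m n α : Type*} [Fintype m] [Fintype n] [DecidableEq n] [CommRing α]

theorem updatedCovariance_sub_eq_mul_mul_transpose {C : Matrix m n α} {R : Matrix m m α} {X : Matrix n n α}
    {K L : Matrix n m α} (hX : Xᵀ = X) (hR : Rᵀ = R) (hK : K * (C * X * Cᵀ + R) = X * Cᵀ) :
    (1 - L * C) * X * (1 - L * C)ᵀ + L * R * Lᵀ - (1 - K * C) * X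
      = (L - K) * (C * X * Cᵀ + R) * (L - K)ᵀ := by
  set S := C * X * Cᵀ + R with hS_def
  have hS : Sᵀ = S := by
    simp only [hS_def, transpose_add, transpose_mul, transpose_transpose, hX, hR, Matrix.mul_assoc]
  have hSKt : S * Kᵀ = C * X := by
    rw [← hS, ← transpose_mul, hK, transpose_mul, transpose_transpose, hX]
  have hKSKt : K * S * Kᵀ = K * C * X := by
    rw [Matrix.mul_assoc, hSKt, Matrix.mul_assoc]
  have hKSLt : K * S * Lᵀ = X * Cᵀ * Lᵀ := by rw [hK]
  have hLSLt : L * S * Lᵀ = L * C * X * Cᵀ * Lᵀ + L * R * Lᵀ := by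
    simp only [hS_def, Matrix.mul_add, Matrix.add_mul, Matrix.mul_assoc]
  calc (1 - L * C) * X * (1 - L * C)ᵀ + L * R * Lᵀ - (1 - K * C) * X
      = L * S * Lᵀ - L * (C * X) - X * Cᵀ * Lᵀ + K * C * X := by
        rw [hLSLt]
        simp only [transpose_sub, transpose_one, transpose_mul, Matrix.sub_mul,
          Matrix.mul_sub, Matrix.one_mul, Matrix.mul_one, Matrix.mul_assoc]
        abel
    _ = L * S * Lᵀ - L * (S * Kᵀ) - K * S * Lᵀ + K * S * Kᵀ := by
        rw [hSKt, hKSLt, hKSKt]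
    _ = (L - K) * S * (L - K)ᵀ := by
        simp only [transpose_sub, Matrix.sub_mul, Matrix.mul_sub, Matrix.mul_assoc]
        abel

end Matrix

/-- The Kalman gain minimizes the updated error covariance over all gains,
in the Loewner order. -/
theorem stmt_2 {n q : ℕ} (C : Matrix (Fin q) (Fin n) ℝ) (R : Matrix (Fin q) (Fin q) ℝ)
    (hR : R.PosDef) (X : Matrix (Fin n) (Fin n) ℝ) (hX : X.PosSemidef)
    (K : Matrix (Fin n) (Fin q) ℝ) (hK : K = X * Cᵀ * (C * X * Cᵀ + R)⁻¹) :
    ∀ Khat : Matrix (Fin n) (Fin q) ℝ,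
      ((1 - Khat * C) * X * (1 - Khat * C)ᵀ + Khat * R * Khatᵀ
        - (1 - K * C) * X).PosSemidef := by
  intro Khat
  have hS : (C * X * Cᵀ + R).PosDef := by
    refine PosDef.posSemidef_add ?_ hR
    simpa using hX.mul_mul_conjTranspose_same C
  have hKS : K * (C * X * Cᵀ + R) = X * Cᵀ := by
    rw [hK, Matrix.mul_assoc, nonsing_inv_mul _ ((isUnit_iff_isUnit_det _).mp hS.isUnit),
      Matrix.mul_one]
  rw [updatedCovariance_sub_eq_mul_mul_transpose
    (isHermitian_iff_isSymm.mp hX.isHermitian).eq (isHermitian_iff_isSymm.mp hR.isHermitian).eq hKS]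
  simpa using hS.posSemidef.mul_mul_conjTranspose_same (Khat - K)
end

section
/- Let T ≥ 1 be an integer and define Φ_T = h^T ∘ g̃, the map taking a prior covariance through one measurement update followed by T time updates. If X and Y are n×n symmetric positive semidefinite matrices with X ≤ Y in the Loewner order, then Φ_T(X) ≤ Φ_T(Y). In particular the maps h and g̃ themselves are monotone with respect to the Loewner order on positive semidefinite matrices. -/
/-!
The time update `X ↦ A X Aᴴ + Q` is a congruence plus a constant, hence monotone, and so are
its iterates. For the measurement update, completing the square in the gain `K` gives
`(1 - K C) X (1 - K C)ᴴ + K R Kᴴ = g̃(X) + (K - K_X) S_X (K - K_X)ᴴ`, where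
`S_X = C X Cᴴ + R` and `K_X = X Cᴴ S_X⁻¹` is the Kalman gain. So `g̃(X)` is the minimum over `K`
of this Joseph form `J_K(X)`, attained at `K_X`; as the Joseph form is monotone in `X` for fixed `K`,
`g̃(X) ≤ J_{K_Y}(X) ≤ J_{K_Y}(Y) = g̃(Y)`.
-/

open Matrix

open scoped MatrixOrder ComplexOrder

noncomputable section

namespace KalmanFilter

variable {𝕜 m n : Type*} [RCLike 𝕜] [Fintype m] [Fintype n]

lemma conj_le_conj {X Y : Matrix n n 𝕜} (hXY : X ≤ Y) (B : Matrix m n 𝕜) :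
    B * X * Bᴴ ≤ B * Y * Bᴴ := by
  rw [le_iff, ← Matrix.sub_mul, ← Matrix.mul_sub]
  exact hXY.mul_mul_conjTranspose_same B

lemma monotone_mul_mul_conjTranspose_add (A Q : Matrix n n 𝕜) : Monotone fun X => A * X * Aᴴ + Q :=
  fun _ _ hXY => add_le_add_left (conj_le_conj hXY A) Q

lemma innovation_posDef {C : Matrix m n 𝕜} {R : Matrix m m 𝕜} {X : Matrix n n 𝕜}
    (hX : X.PosSemidef) (hR : R.PosDef) : (C * X * Cᴴ + R).PosDef :=
  hR.posSemidef_add (hX.mul_mul_conjTranspose_same C)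

def josephForm [DecidableEq n] (C : Matrix m n 𝕜) (R : Matrix m m 𝕜) (K : Matrix n m 𝕜)
    (X : Matrix n n 𝕜) : Matrix n n 𝕜 :=
  (1 - K * C) * X * (1 - K * C)ᴴ + K * R * Kᴴ

lemma monotone_josephForm [DecidableEq n] {C : Matrix m n 𝕜} {R : Matrix m m 𝕜}
    (K : Matrix n m 𝕜) : Monotone (josephForm C R K) :=
  fun _ _ hXY => add_le_add_left (conj_le_conj hXY (1 - K * C)) (K * R * Kᴴ)

variable [DecidableEq m]

def measurementUpdate (C : Matrix m n 𝕜) (R : Matrix m m 𝕜) (X : Matrix n n 𝕜) :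
    Matrix n n 𝕜 :=
  X - X * Cᴴ * (C * X * Cᴴ + R)⁻¹ * C * X

def kalmanGain (C : Matrix m n 𝕜) (R : Matrix m m 𝕜) (X : Matrix n n 𝕜) : Matrix n m 𝕜 :=
  X * Cᴴ * (C * X * Cᴴ + R)⁻¹

variable [DecidableEq n] {C : Matrix m n 𝕜} {R : Matrix m m 𝕜}

lemma josephForm_eq_measurementUpdate_add {X : Matrix n n 𝕜} (hX : X.IsHermitian)
    (hR : R.IsHermitian) (hS : IsUnit (C * X * Cᴴ + R)) (K : Matrix n m 𝕜) :
    josephForm C R K X = measurementUpdate C R X +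
      (K - kalmanGain C R X) * (C * X * Cᴴ + R) * (K - kalmanGain C R X)ᴴ := by
  set S := C * X * Cᴴ + R with hSdef
  have hSherm : S.IsHermitian := (isHermitian_mul_mul_conjTranspose C hX).add hR
  have hLS : kalmanGain C R X * S = X * Cᴴ := by
    rw [kalmanGain, Matrix.mul_assoc, nonsing_inv_mul _ ((isUnit_iff_isUnit_det S).mp hS),
      Matrix.mul_one]
  have hSL : S * (kalmanGain C R X)ᴴ = C * X := by
    rw [← hSherm.eq, ← conjTranspose_mul, hLS, conjTranspose_mul, hX.eq,
      conjTranspose_conjTranspose]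
  have hU : measurementUpdate C R X = X - kalmanGain C R X * C * X := by
    rw [measurementUpdate, kalmanGain]
  rw [josephForm, hU]
  generalize kalmanGain C R X = L at *
  have hLS' : ∀ Z : Matrix m n 𝕜, L * (S * Z) = X * Cᴴ * Z := fun Z => by
    rw [← Matrix.mul_assoc, hLS]
  simp only [conjTranspose_sub, conjTranspose_mul, conjTranspose_one, Matrix.sub_mul,
    Matrix.mul_sub, Matrix.one_mul, Matrix.mul_one, Matrix.mul_assoc, hSL, hLS']
  rw [hSdef]
  simp only [Matrix.mul_add, Matrix.add_mul, Matrix.mul_assoc]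
  abel

lemma josephForm_kalmanGain {X : Matrix n n 𝕜} (hX : X.PosSemidef) (hR : R.PosDef) :
    josephForm C R (kalmanGain C R X) X = measurementUpdate C R X := by
  rw [josephForm_eq_measurementUpdate_add hX.isHermitian hR.isHermitian
    (innovation_posDef hX hR).isUnit, sub_self, Matrix.zero_mul, Matrix.zero_mul, add_zero]

lemma measurementUpdate_le_josephForm {X : Matrix n n 𝕜} (hX : X.PosSemidef) (hR : R.PosDef)
    (K : Matrix n m 𝕜) : measurementUpdate C R X ≤ josephForm C R K X := by
  have hS := innovation_posDef (C := C) hX hR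
  rw [le_iff, josephForm_eq_measurementUpdate_add hX.isHermitian hR.isHermitian hS.isUnit,
    add_sub_cancel_left]
  exact hS.posSemidef.mul_mul_conjTranspose_same _

theorem measurementUpdate_mono (hR : R.PosDef) {X Y : Matrix n n 𝕜} (hX : X.PosSemidef)
    (hXY : X ≤ Y) : measurementUpdate C R X ≤ measurementUpdate C R Y := by
  have hY : Y.PosSemidef := (hX.nonneg.trans hXY).posSemidef
  calc measurementUpdate C R X ≤ josephForm C R (kalmanGain C R Y) X :=
        measurementUpdate_le_josephForm hX hR _
    _ ≤ josephForm C R (kalmanGain C R Y) Y := monotone_josephForm _ hXY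
    _ = measurementUpdate C R Y := josephForm_kalmanGain hY hR

end KalmanFilter

end

open KalmanFilter

theorem stmt_4_general {n q : ℕ} (A : Matrix (Fin n) (Fin n) ℝ) (C : Matrix (Fin q) (Fin n) ℝ)
    (Q : Matrix (Fin n) (Fin n) ℝ)
    (R : Matrix (Fin q) (Fin q) ℝ) (hR : R.PosDef)
    (h gt : Matrix (Fin n) (Fin n) ℝ → Matrix (Fin n) (Fin n) ℝ)
    (hh : ∀ X, h X = A * X * Aᵀ + Q)
    (hgt : ∀ X, gt X = X - X * Cᵀ * (C * X * Cᵀ + R)⁻¹ * C * X)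
    (T : ℕ)
    (X Y : Matrix (Fin n) (Fin n) ℝ) (hX : X.PosSemidef)
    (hXY : (Y - X).PosSemidef) :
    (h Y - h X).PosSemidef ∧ (gt Y - gt X).PosSemidef ∧
      (h^[T] (gt Y) - h^[T] (gt X)).PosSemidef := by
  have h_eq : h = fun X => A * X * Aᴴ + Q := by
    funext X
    rw [hh, conjTranspose_eq_transpose_of_trivial]
  have gt_eq : gt = measurementUpdate C R := by
    funext X
    rw [hgt, measurementUpdate, conjTranspose_eq_transpose_of_trivial]
  have h_mono : Monotone h := h_eq ▸ monotone_mul_mul_conjTranspose_add A Q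
  have gt_le : gt X ≤ gt Y := gt_eq ▸ measurementUpdate_mono hR hX hXY
  exact ⟨h_mono hXY, gt_le, h_mono.iterate T gt_le⟩

/-- Monotonicity of the time update `h`, the measurement update `g̃`, and
`Φ_T = h^T ∘ g̃` with respect to the Loewner order on positive semidefinite matrices. -/
theorem stmt_4 {n q : ℕ} (A : Matrix (Fin n) (Fin n) ℝ) (C : Matrix (Fin q) (Fin n) ℝ)
    (Q : Matrix (Fin n) (Fin n) ℝ) (hQ : Q.PosSemidef)
    (R : Matrix (Fin q) (Fin q) ℝ) (hR : R.PosDef)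
    (h gt : Matrix (Fin n) (Fin n) ℝ → Matrix (Fin n) (Fin n) ℝ)
    (hh : ∀ X, h X = A * X * Aᵀ + Q)
    (hgt : ∀ X, gt X = X - X * Cᵀ * (C * X * Cᵀ + R)⁻¹ * C * X)
    (T : ℕ) (hT : 1 ≤ T)
    (X Y : Matrix (Fin n) (Fin n) ℝ) (hX : X.PosSemidef) (hY : Y.PosSemidef)
    (hXY : (Y - X).PosSemidef) :
    (h Y - h X).PosSemidef ∧ (gt Y - gt X).PosSemidef ∧
      (h^[T] (gt Y) - h^[T] (gt X)).PosSemidef :=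
  stmt_4_general A C Q R hR h gt hh hgt T X Y hX hXY
end

section
/- Let T ≥ 1 be an integer, Φ_T = h^T ∘ g̃, and let K̃ be any n×q real matrix. Define the suboptimal-filter covariance recursion Ṽ_{l+1} = A^T (I − K̃ C) Ṽ_l (I − K̃ C)ᵀ (Aᵀ)^T + A^T K̃ R K̃ᵀ (Aᵀ)^T + Σ_{i=0}^{T−1} A^i Q (Aᵀ)^i. If V₀ = Ṽ₀ is symmetric positive semidefinite, then Φ_T^l(V₀) ≤ Ṽ_l in the Loewner order for every l ≥ 0. -/
open Matrix Finset

set_option maxHeartbeats 1000000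

variable {n q : ℕ}

lemma aux_S_posdef (C : Matrix (Fin q) (Fin n) ℝ) {R : Matrix (Fin q) (Fin q) ℝ}
    (hR : R.PosDef) {X : Matrix (Fin n) (Fin n) ℝ} (hX : X.PosSemidef) :
    (C * X * Cᵀ + R).PosDef := by
  have h1 : (C * X * Cᵀ).PosSemidef := by
    simpa [conjTranspose_eq_transpose_of_trivial] using hX.mul_mul_conjTranspose_same C
  exact Matrix.PosDef.posSemidef_add h1 hR

lemma aux_key_eq (C : Matrix (Fin q) (Fin n) ℝ) {R : Matrix (Fin q) (Fin q) ℝ}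
    (hR : R.PosDef) {X : Matrix (Fin n) (Fin n) ℝ} (hX : X.PosSemidef)
    (K : Matrix (Fin n) (Fin q) ℝ) :
    (K - X * Cᵀ * (C * X * Cᵀ + R)⁻¹) * (C * X * Cᵀ + R)
        * (K - X * Cᵀ * (C * X * Cᵀ + R)⁻¹)ᵀ
      = (1 - K * C) * X * (1 - K * C)ᵀ + K * R * Kᵀ
        - (X - X * Cᵀ * (C * X * Cᵀ + R)⁻¹ * C * X) := by
  have hS : (C * X * Cᵀ + R).PosDef := aux_S_posdef C hR hX
  have hdet : IsUnit (C * X * Cᵀ + R).det := isUnit_iff_ne_zero.mpr (ne_of_gt hS.det_pos)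
  have hXt : Xᵀ = X := by
    rw [← conjTranspose_eq_transpose_of_trivial]; exact hX.1
  have hSt : (C * X * Cᵀ + R)ᵀ = C * X * Cᵀ + R := by
    rw [← conjTranspose_eq_transpose_of_trivial]; exact hS.1
  have hSinvT : ((C * X * Cᵀ + R)⁻¹)ᵀ = (C * X * Cᵀ + R)⁻¹ := by
    rw [transpose_nonsing_inv, hSt]
  have hMT : (K - X * Cᵀ * (C * X * Cᵀ + R)⁻¹)ᵀ
      = Kᵀ - (C * X * Cᵀ + R)⁻¹ * (C * X) := by
    rw [Matrix.transpose_sub, Matrix.transpose_mul, Matrix.transpose_mul,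
      Matrix.transpose_transpose, hSinvT, hXt, Matrix.mul_assoc]
  rw [hMT]
  rw [Matrix.sub_mul, Matrix.sub_mul, Matrix.mul_sub, Matrix.mul_sub]
  rw [Matrix.nonsing_inv_mul_cancel_right _ _ hdet]
  have r1 : K * (C * X * Cᵀ + R) * ((C * X * Cᵀ + R)⁻¹ * (C * X)) = K * (C * X) := by
    rw [← Matrix.mul_assoc, Matrix.mul_nonsing_inv_cancel_right _ _ hdet]
  have r2 : X * Cᵀ * ((C * X * Cᵀ + R)⁻¹ * (C * X)) = X * Cᵀ * (C * X * Cᵀ + R)⁻¹ * C * X := by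
    simp only [Matrix.mul_assoc]
  have r3 : K * (C * X * Cᵀ + R) * Kᵀ = K * C * X * Cᵀ * Kᵀ + K * R * Kᵀ := by
    rw [Matrix.mul_add, Matrix.add_mul]; simp only [Matrix.mul_assoc]
  rw [r1, r2, r3]
  have e2 : ((1 : Matrix (Fin n) (Fin n) ℝ) - K * C)ᵀ = 1 - Cᵀ * Kᵀ := by
    rw [Matrix.transpose_sub, Matrix.transpose_mul, Matrix.transpose_one]
  rw [e2]
  simp only [Matrix.sub_mul, Matrix.mul_sub, Matrix.one_mul, Matrix.mul_one, Matrix.mul_assoc]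
  abel

lemma aux_key (C : Matrix (Fin q) (Fin n) ℝ) {R : Matrix (Fin q) (Fin q) ℝ}
    (hR : R.PosDef) {X : Matrix (Fin n) (Fin n) ℝ} (hX : X.PosSemidef)
    (K : Matrix (Fin n) (Fin q) ℝ) :
    ((1 - K * C) * X * (1 - K * C)ᵀ + K * R * Kᵀ
      - (X - X * Cᵀ * (C * X * Cᵀ + R)⁻¹ * C * X)).PosSemidef := by
  rw [← aux_key_eq C hR hX K]
  have := (aux_S_posdef C hR hX).posSemidef.mul_mul_conjTranspose_same
    (K - X * Cᵀ * (C * X * Cᵀ + R)⁻¹)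
  simpa [conjTranspose_eq_transpose_of_trivial] using this

lemma aux_gt_psd (C : Matrix (Fin q) (Fin n) ℝ) {R : Matrix (Fin q) (Fin q) ℝ}
    (hR : R.PosDef) {X : Matrix (Fin n) (Fin n) ℝ} (hX : X.PosSemidef) :
    (X - X * Cᵀ * (C * X * Cᵀ + R)⁻¹ * C * X).PosSemidef := by
  set K : Matrix (Fin n) (Fin q) ℝ := X * Cᵀ * (C * X * Cᵀ + R)⁻¹ with hK
  have e := aux_key_eq C hR hX K
  rw [sub_self, Matrix.zero_mul, Matrix.zero_mul] at e
  have e' : X - X * Cᵀ * (C * X * Cᵀ + R)⁻¹ * C * X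
      = (1 - K * C) * X * (1 - K * C)ᵀ + K * R * Kᵀ :=
    (sub_eq_zero.mp e.symm).symm
  rw [e']
  have h1 := hX.mul_mul_conjTranspose_same (1 - K * C)
  rw [conjTranspose_eq_transpose_of_trivial] at h1
  have h2 := hR.posSemidef.mul_mul_conjTranspose_same K
  rw [conjTranspose_eq_transpose_of_trivial] at h2
  exact h1.add h2

lemma aux_hT (A Q : Matrix (Fin n) (Fin n) ℝ)
    (h : Matrix (Fin n) (Fin n) ℝ → Matrix (Fin n) (Fin n) ℝ)
    (hh : ∀ X, h X = A * X * Aᵀ + Q) (T : ℕ) (X : Matrix (Fin n) (Fin n) ℝ) :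
    h^[T] X = A ^ T * X * Aᵀ ^ T + ∑ i ∈ Finset.range T, A ^ i * Q * Aᵀ ^ i := by
  induction T with
  | zero => simp
  | succ T ih =>
    have step : ∀ (i : ℕ) (Y : Matrix (Fin n) (Fin n) ℝ),
        A * (A ^ i * Y * Aᵀ ^ i) * Aᵀ = A ^ (i + 1) * Y * Aᵀ ^ (i + 1) := by
      intro i Y
      rw [pow_succ', pow_succ]
      simp only [Matrix.mul_assoc]
    rw [Function.iterate_succ_apply', ih, hh, Finset.sum_range_succ']
    rw [Matrix.mul_add, Matrix.add_mul, Finset.mul_sum, Finset.sum_mul]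
    simp only [step, pow_zero, Matrix.one_mul, Matrix.mul_one]
    abel

lemma aux_sum_psd {m : ℕ} (s : Finset ℕ) (f : ℕ → Matrix (Fin m) (Fin m) ℝ)
    (hf : ∀ i ∈ s, (f i).PosSemidef) : (∑ i ∈ s, f i).PosSemidef :=
  Finset.sum_induction f _ (fun _ _ ha hb => ha.add hb) Matrix.PosSemidef.zero hf

/-- The optimal iterates `Φ_T^l(V₀)` are dominated, in the Loewner order, by the
covariance recursion of any suboptimal filter with fixed gain `K̃`. -/
theorem stmt_8 {n q : ℕ} (A : Matrix (Fin n) (Fin n) ℝ) (C : Matrix (Fin q) (Fin n) ℝ)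
    (Q : Matrix (Fin n) (Fin n) ℝ) (hQ : Q.PosSemidef)
    (R : Matrix (Fin q) (Fin q) ℝ) (hR : R.PosDef)
    (h gt : Matrix (Fin n) (Fin n) ℝ → Matrix (Fin n) (Fin n) ℝ)
    (hh : ∀ X, h X = A * X * Aᵀ + Q)
    (hgt : ∀ X, gt X = X - X * Cᵀ * (C * X * Cᵀ + R)⁻¹ * C * X)
    (T : ℕ) (hT : 1 ≤ T)
    (Kt : Matrix (Fin n) (Fin q) ℝ)
    (V₀ : Matrix (Fin n) (Fin n) ℝ) (hV₀ : V₀.PosSemidef)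
    (Vt : ℕ → Matrix (Fin n) (Fin n) ℝ) (hVt0 : Vt 0 = V₀)
    (hVt : ∀ l : ℕ, Vt (l + 1)
      = A ^ T * ((1 - Kt * C) * Vt l * (1 - Kt * C)ᵀ) * Aᵀ ^ T
        + A ^ T * (Kt * R * Ktᵀ) * Aᵀ ^ T
        + ∑ i ∈ Finset.range T, A ^ i * Q * Aᵀ ^ i) :
    ∀ l : ℕ, (Vt l - (h^[T] ∘ gt)^[l] V₀).PosSemidef := by
  have hconj : ∀ (m : ℕ) (B : Matrix (Fin n) (Fin n) ℝ), B.PosSemidef →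
      (A ^ m * B * Aᵀ ^ m).PosSemidef := by
    intro m B hB
    have := hB.mul_mul_conjTranspose_same (A ^ m)
    rwa [conjTranspose_eq_transpose_of_trivial, transpose_pow] at this
  have key : ∀ l : ℕ, ((h^[T] ∘ gt)^[l] V₀).PosSemidef
      ∧ (Vt l - (h^[T] ∘ gt)^[l] V₀).PosSemidef := by
    intro l
    induction l with
    | zero =>
      refine ⟨by simpa using hV₀, ?_⟩
      simp only [Function.iterate_zero, id_eq, hVt0, sub_self]
      exact Matrix.PosSemidef.zero
    | succ l ih =>
      obtain ⟨hWpsd, hdiff⟩ := ih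
      set W : Matrix (Fin n) (Fin n) ℝ := (h^[T] ∘ gt)^[l] V₀ with hWdef
      set G : Matrix (Fin n) (Fin n) ℝ := W - W * Cᵀ * (C * W * Cᵀ + R)⁻¹ * C * W with hGdef
      have hGpsd : G.PosSemidef := aux_gt_psd C hR hWpsd
      have hWsucc : (h^[T] ∘ gt)^[l + 1] V₀
          = A ^ T * G * Aᵀ ^ T + ∑ i ∈ Finset.range T, A ^ i * Q * Aᵀ ^ i := by
        rw [Function.iterate_succ_apply', Function.comp_apply, ← hWdef, hgt, ← hGdef,
          aux_hT A Q h hh T G]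
      constructor
      · rw [hWsucc]
        exact (hconj T G hGpsd).add
          (aux_sum_psd _ _ fun i _ => hconj i Q hQ)
      · have eD : Vt (l + 1) - (h^[T] ∘ gt)^[l + 1] V₀
            = A ^ T * ((1 - Kt * C) * (Vt l - W) * (1 - Kt * C)ᵀ
                + ((1 - Kt * C) * W * (1 - Kt * C)ᵀ + Kt * R * Ktᵀ - G)) * Aᵀ ^ T := by
          rw [hVt l, hWsucc]
          noncomm_ring
        rw [eD]
        have hD1 := hdiff.mul_mul_conjTranspose_same (1 - Kt * C)
        rw [conjTranspose_eq_transpose_of_trivial] at hD1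
        have hD2 : ((1 - Kt * C) * W * (1 - Kt * C)ᵀ + Kt * R * Ktᵀ - G).PosSemidef := by
          rw [hGdef]
          exact aux_key C hR hWpsd Kt
        exact hconj T _ (hD1.add hD2)
  exact fun l => (key l).2
end

section
/- Let T ≥ 1 be an integer and Φ_T = h^T ∘ g̃. Suppose there exists an n×q real matrix K̃ such that the spectral radius of A^T (I − K̃ C) is strictly less than 1 (detectability of (C, A^T)). Then the sequence of iterates Φ_T^l(0), l ≥ 0, is bounded above in the Loewner order: there exists a symmetric positive semidefinite matrix M with Φ_T^l(0) ≤ M for all l. -/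
/-!
Among all gains `K`, the Joseph form `(1 - K C) X (1 - K C)ᵀ + K R Kᵀ` is minimised by the Kalman
gain `L = X Cᵀ S⁻¹`, `S = C X Cᵀ + R`, where it equals `g̃ X`; the excess is `(K - L) S (K - L)ᵀ`.
With the detecting gain `K̃`, one step of `Φ_T` is therefore dominated by the monotone affine map
`X ↦ W + F X Fᵀ`, `F = A^T (1 - K̃ C)`, `W = h^T (K̃ R K̃ᵀ)`. As `ρ(F) < 1`, Gelfand's formula makes
`∑ Fⁱ W (Fⁱ)ᵀ` converge, and its sum `M` is a positive semidefinite fixed point of that map, which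
bounds every iterate `Φ_T^l 0` by induction.
-/

open Matrix Filter
open scoped MatrixOrder NNReal

theorem eventually_norm_pow_le_of_spectralRadius_lt {A : Type*} [NormedRing A]
    [NormedAlgebra ℂ A] [CompleteSpace A] {a : A} {r : ℝ≥0} (h : spectralRadius ℂ a < r) :
    ∀ᶠ k : ℕ in atTop, ‖a ^ k‖ ≤ r ^ k := by
  filter_upwards [(spectrum.pow_norm_pow_one_div_tendsto_nhds_spectralRadius a).eventually_lt_const
    h, eventually_gt_atTop 0] with k hk hk0
  rw [ENNReal.ofReal_lt_iff_lt_toReal (by positivity) ENNReal.coe_ne_top, ENNReal.coe_toReal,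
    one_div] at hk
  simpa using ((Real.rpow_inv_lt_iff_of_pos (norm_nonneg _) r.2 (by positivity)).1 hk).le

theorem iterate_le_of_map_le {α : Type*} [Preorder α] {S : Set α} {f g : α → α}
    (hf : Set.MapsTo f S S) (hfg : ∀ x ∈ S, f x ≤ g x) (hg : Monotone g) {x M : α}
    (hx : x ∈ S) (hxM : x ≤ M) (hM : g M ≤ M) (l : ℕ) : f^[l] x ≤ M := by
  induction l with
  | zero => exact hxM
  | succ l ih =>
    rw [Function.iterate_succ_apply']
    exact (hfg _ (hf.iterate l hx)).trans ((hg ih).trans hM)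

namespace Matrix

variable {m p : Type*} [Fintype m] [Fintype p]

theorem isClosed_setOf_posSemidef : IsClosed {X : Matrix m m ℝ | X.PosSemidef} := by
  simp only [posSemidef_iff_dotProduct_mulVec, Set.ofPred_and, Set.ofPred_forall]
  exact (isClosed_eq (by fun_prop) continuous_id).inter
    (isClosed_iInter fun x => isClosed_le continuous_const (by fun_prop))

theorem PosSemidef.mul_mul_transpose_same {X : Matrix m m ℝ} (hX : X.PosSemidef)
    (B : Matrix p m ℝ) : (B * X * Bᵀ).PosSemidef := by
  simpa using hX.mul_mul_conjTranspose_same B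

theorem mul_mul_transpose_le_mul_mul_transpose {X Y : Matrix m m ℝ} (h : X ≤ Y)
    (B : Matrix p m ℝ) : B * X * Bᵀ ≤ B * Y * Bᵀ := by
  rw [Matrix.le_iff, ← Matrix.sub_mul, ← Matrix.mul_sub]
  exact (Matrix.le_iff.1 h).mul_mul_transpose_same B

theorem PosSemidef.isUnit_det_mul_mul_transpose_add [DecidableEq p] {X : Matrix m m ℝ}
    (hX : X.PosSemidef) (C : Matrix p m ℝ) {R : Matrix p p ℝ} (hR : R.PosDef) :
    IsUnit (C * X * Cᵀ + R).det :=
  (isUnit_iff_isUnit_det _).1 (PosDef.posSemidef_add (hX.mul_mul_transpose_same C) hR).isUnit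

theorem summable_pow_mul_mul_transpose_pow {F : Matrix m m ℝ} [DecidableEq m]
    (hF : spectralRadius ℂ (F.map Complex.ofReal) < 1) (W : Matrix m m ℝ) :
    Summable fun i : ℕ => F ^ i * W * (F ^ i)ᵀ := by
  -- The Frobenius norm is submultiplicative, invariant under transposition and unchanged by
  -- complexification.
  open scoped Matrix.Norms.Frobenius in
  obtain ⟨r, hFr, hr1⟩ := ENNReal.lt_iff_exists_nnreal_btwn.1 hF
  have hr : (r : ℝ) < 1 := by exact_mod_cast hr1
  have hpow : ∀ᶠ i : ℕ in atTop, ‖F ^ i‖ ≤ r ^ i := by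
    filter_upwards [eventually_norm_pow_le_of_spectralRadius_lt hFr] with i hi
    have hmap : (F ^ i).map Complex.ofReal = F.map Complex.ofReal ^ i :=
      Matrix.map_pow F Complex.ofRealHom i
    rwa [← hmap, frobenius_norm_map_eq _ _ Complex.norm_real] at hi
  have hr2 : (r : ℝ) ^ 2 < 1 := pow_lt_one₀ r.2 hr two_ne_zero
  refine .of_norm_bounded_eventually
    ((summable_geometric_of_lt_one (by positivity) hr2).mul_left ‖W‖) ?_
  rw [Nat.cofinite_eq_atTop]
  filter_upwards [hpow] with i hi
  calc ‖F ^ i * W * (F ^ i)ᵀ‖ ≤ ‖F ^ i‖ * ‖W‖ * ‖F ^ i‖ := by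
        grw [frobenius_norm_mul, frobenius_norm_mul, frobenius_norm_transpose]
    _ ≤ r ^ i * ‖W‖ * r ^ i := by gcongr
    _ = ‖W‖ * ((r : ℝ) ^ 2) ^ i := by ring

theorem exists_posSemidef_add_mul_mul_transpose_eq {F W : Matrix m m ℝ} [DecidableEq m]
    (hF : spectralRadius ℂ (F.map Complex.ofReal) < 1) (hW : W.PosSemidef) :
    ∃ M : Matrix m m ℝ, M.PosSemidef ∧ W + F * M * Fᵀ = M := by
  have hs := summable_pow_mul_mul_transpose_pow hF W
  refine ⟨∑' i, F ^ i * W * (F ^ i)ᵀ, ?_, ?_⟩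
  · exact isClosed_setOf_posSemidef.mem_of_tendsto hs.hasSum
      (.of_forall fun s => posSemidef_sum s fun i _ => hW.mul_mul_transpose_same _)
  · have hsucc : ∀ i : ℕ, F ^ (i + 1) * W * (F ^ (i + 1))ᵀ = F * (F ^ i * W * (F ^ i)ᵀ) * Fᵀ :=
      fun i => by simp only [pow_succ', transpose_mul, Matrix.mul_assoc]
    have h := hs.tsum_eq_zero_add
    rw [tsum_congr hsucc, (hs.mul_left F).tsum_mul_right, hs.tsum_mul_left] at h
    simpa using h.symm

end Matrix

namespace Kalman

variable {m p : Type*} [Fintype m] [Fintype p]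

def timeUpdate (A Q X : Matrix m m ℝ) : Matrix m m ℝ := A * X * Aᵀ + Q

variable {A Q X : Matrix m m ℝ}

theorem posSemidef_timeUpdate_iterate (hQ : Q.PosSemidef) (hX : X.PosSemidef) (k : ℕ) :
    ((timeUpdate A Q)^[k] X).PosSemidef := by
  induction k with
  | zero => exact hX
  | succ k ih =>
    rw [Function.iterate_succ_apply']
    exact (ih.mul_mul_transpose_same A).add hQ

theorem monotone_timeUpdate_iterate (A Q : Matrix m m ℝ) (k : ℕ) :
    Monotone (timeUpdate A Q)^[k] :=
  Monotone.iterate (fun _ _ h => add_le_add_left (mul_mul_transpose_le_mul_mul_transpose h A) Q) k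

variable [DecidableEq m]

theorem timeUpdate_iterate_add (A Q X Z : Matrix m m ℝ) (k : ℕ) :
    (timeUpdate A Q)^[k] (X + Z) = (timeUpdate A Q)^[k] X + A ^ k * Z * (A ^ k)ᵀ := by
  induction k with
  | zero => simp
  | succ k ih =>
    simp only [Function.iterate_succ_apply', ih, timeUpdate, pow_succ', transpose_mul,
      Matrix.mul_add, Matrix.add_mul, Matrix.mul_assoc]
    abel

def josephUpdate (K : Matrix m p ℝ) (C : Matrix p m ℝ) (R : Matrix p p ℝ) (X : Matrix m m ℝ) :
    Matrix m m ℝ :=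
  (1 - K * C) * X * (1 - K * C)ᵀ + K * R * Kᵀ

variable {C : Matrix p m ℝ} {R : Matrix p p ℝ}

theorem posSemidef_josephUpdate (K : Matrix m p ℝ) (hX : X.PosSemidef) (hR : R.PosSemidef) :
    (josephUpdate K C R X).PosSemidef :=
  (hX.mul_mul_transpose_same _).add (hR.mul_mul_transpose_same K)

variable [DecidableEq p]

noncomputable def gain (C : Matrix p m ℝ) (R : Matrix p p ℝ) (X : Matrix m m ℝ) : Matrix m p ℝ :=
  X * Cᵀ * (C * X * Cᵀ + R)⁻¹

noncomputable def measurementUpdate (C : Matrix p m ℝ) (R : Matrix p p ℝ) (X : Matrix m m ℝ) :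
    Matrix m m ℝ :=
  X - X * Cᵀ * (C * X * Cᵀ + R)⁻¹ * C * X

theorem josephUpdate_sub_measurementUpdate (K : Matrix m p ℝ) (hX : X.IsSymm) (hR : R.IsSymm)
    (hS : IsUnit (C * X * Cᵀ + R).det) :
    josephUpdate K C R X - measurementUpdate C R X =
      (K - gain C R X) * (C * X * Cᵀ + R) * (K - gain C R X)ᵀ := by
  set S := C * X * Cᵀ + R with hSdef
  have hSinv : S⁻¹ᵀ = S⁻¹ := by
    rw [transpose_nonsing_inv, hSdef, transpose_add, transpose_mul, transpose_mul, hX.eq, hR.eq,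
      transpose_transpose, Matrix.mul_assoc]
  have hcancel : ∀ Y : Matrix p m ℝ, S * (S⁻¹ * Y) = Y := fun Y => by
    rw [← Matrix.mul_assoc, mul_nonsing_inv _ hS, Matrix.one_mul]
  have hcancel' : ∀ Y : Matrix p m ℝ, S⁻¹ * (S * Y) = Y := fun Y => by
    rw [← Matrix.mul_assoc, nonsing_inv_mul _ hS, Matrix.one_mul]
  have hR' : R = S - C * X * Cᵀ := by rw [hSdef]; abel
  simp only [josephUpdate, measurementUpdate, gain, ← hSdef]
  rw [hR']
  simp only [transpose_sub, transpose_mul, transpose_one, transpose_transpose, hSinv, hX.eq,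
    Matrix.sub_mul, Matrix.mul_sub, Matrix.one_mul, Matrix.mul_one, Matrix.mul_assoc, hcancel,
    hcancel']
  abel

theorem measurementUpdate_eq_josephUpdate_gain (hX : X.IsSymm) (hR : R.IsSymm)
    (hS : IsUnit (C * X * Cᵀ + R).det) :
    measurementUpdate C R X = josephUpdate (gain C R X) C R X := by
  have h := josephUpdate_sub_measurementUpdate (gain C R X) hX hR hS
  rw [sub_self, Matrix.zero_mul, Matrix.zero_mul] at h
  exact (sub_eq_zero.1 h).symm

theorem posSemidef_measurementUpdate (hX : X.PosSemidef) (hR : R.PosDef) :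
    (measurementUpdate C R X).PosSemidef := by
  rw [measurementUpdate_eq_josephUpdate_gain (isHermitian_iff_isSymm.1 hX.1)
    (isHermitian_iff_isSymm.1 hR.1) (hX.isUnit_det_mul_mul_transpose_add C hR)]
  exact posSemidef_josephUpdate _ hX hR.posSemidef

theorem measurementUpdate_le_josephUpdate (K : Matrix m p ℝ) (hX : X.PosSemidef) (hR : R.PosDef) :
    measurementUpdate C R X ≤ josephUpdate K C R X := by
  have hS := hX.isUnit_det_mul_mul_transpose_add C hR
  rw [Matrix.le_iff, josephUpdate_sub_measurementUpdate K (isHermitian_iff_isSymm.1 hX.1)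
    (isHermitian_iff_isSymm.1 hR.1) hS]
  exact ((hX.mul_mul_transpose_same C).add hR.posSemidef).mul_mul_transpose_same _

theorem timeUpdate_iterate_measurementUpdate_le (K : Matrix m p ℝ) (hX : X.PosSemidef)
    (hR : R.PosDef) (k : ℕ) :
    (timeUpdate A Q)^[k] (measurementUpdate C R X) ≤
      (timeUpdate A Q)^[k] (K * R * Kᵀ) + (A ^ k * (1 - K * C)) * X * (A ^ k * (1 - K * C))ᵀ := by
  calc (timeUpdate A Q)^[k] (measurementUpdate C R X)
      ≤ (timeUpdate A Q)^[k] (josephUpdate K C R X) :=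
        monotone_timeUpdate_iterate A Q k (measurementUpdate_le_josephUpdate K hX hR)
    _ = _ := by
        rw [josephUpdate, add_comm, timeUpdate_iterate_add]
        simp only [transpose_mul, Matrix.mul_assoc]

end Kalman

open Kalman

theorem stmt_9_general {n q : ℕ} (A : Matrix (Fin n) (Fin n) ℝ) (C : Matrix (Fin q) (Fin n) ℝ)
    (Q : Matrix (Fin n) (Fin n) ℝ) (hQ : Q.PosSemidef)
    (R : Matrix (Fin q) (Fin q) ℝ) (hR : R.PosDef)
    (h gt : Matrix (Fin n) (Fin n) ℝ → Matrix (Fin n) (Fin n) ℝ)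
    (hh : ∀ X, h X = A * X * Aᵀ + Q)
    (hgt : ∀ X, gt X = X - X * Cᵀ * (C * X * Cᵀ + R)⁻¹ * C * X)
    (T : ℕ)
    (Kt : Matrix (Fin n) (Fin q) ℝ)
    (hKt : spectralRadius ℂ ((A ^ T * (1 - Kt * C)).map Complex.ofReal) < 1) :
    ∃ M : Matrix (Fin n) (Fin n) ℝ, M.PosSemidef ∧
      ∀ l : ℕ, (M - (h^[T] ∘ gt)^[l] 0).PosSemidef := by
  obtain rfl : h = timeUpdate A Q := funext hh
  obtain rfl : gt = measurementUpdate C R := funext hgt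
  set F := A ^ T * (1 - Kt * C)
  set W := (timeUpdate A Q)^[T] (Kt * R * Ktᵀ)
  obtain ⟨M, hM, hMF⟩ := exists_posSemidef_add_mul_mul_transpose_eq hKt
    (posSemidef_timeUpdate_iterate hQ (hR.posSemidef.mul_mul_transpose_same Kt) T)
  refine ⟨M, hM, fun l => Matrix.le_iff.1 ?_⟩
  refine iterate_le_of_map_le (S := Set.ofPred PosSemidef) (g := fun X => W + F * X * Fᵀ)
    (fun X hX => posSemidef_timeUpdate_iterate hQ (posSemidef_measurementUpdate hX hR) T)
    (fun X hX => timeUpdate_iterate_measurementUpdate_le Kt hX hR T)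
    (fun X Y hXY => add_le_add_right (mul_mul_transpose_le_mul_mul_transpose hXY F) W)
    PosSemidef.zero (nonneg_iff_posSemidef.2 hM) hMF.le l

/-- Under detectability of `(C, A^T)` (existence of a stabilizing gain `K̃`),
the iterates `Φ_T^l(0)` are bounded above in the Loewner order. -/
theorem stmt_9 {n q : ℕ} (A : Matrix (Fin n) (Fin n) ℝ) (C : Matrix (Fin q) (Fin n) ℝ)
    (Q : Matrix (Fin n) (Fin n) ℝ) (hQ : Q.PosSemidef)
    (R : Matrix (Fin q) (Fin q) ℝ) (hR : R.PosDef)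
    (h gt : Matrix (Fin n) (Fin n) ℝ → Matrix (Fin n) (Fin n) ℝ)
    (hh : ∀ X, h X = A * X * Aᵀ + Q)
    (hgt : ∀ X, gt X = X - X * Cᵀ * (C * X * Cᵀ + R)⁻¹ * C * X)
    (T : ℕ) (hT : 1 ≤ T)
    (Kt : Matrix (Fin n) (Fin q) ℝ)
    (hKt : spectralRadius ℂ ((A ^ T * (1 - Kt * C)).map Complex.ofReal) < 1) :
    ∃ M : Matrix (Fin n) (Fin n) ℝ, M.PosSemidef ∧
      ∀ l : ℕ, (M - (h^[T] ∘ gt)^[l] 0).PosSemidef :=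
  stmt_9_general A C Q hQ R hR h gt hh hgt T Kt hKt
end

section
/- Let T ≥ 1 be an integer and Φ_T = h^T ∘ g̃. For any two n×n symmetric positive semidefinite matrices X and Y, with Kalman gains K_X = X Cᵀ (C X Cᵀ + R)⁻¹ and K_Y = Y Cᵀ (C Y Cᵀ + R)⁻¹, the following difference identity holds: Φ_T(X) − Φ_T(Y) = A^T (I − K_Y C) (X − Y) (I − K_X C)ᵀ (Aᵀ)^T. -/
/-!
The time update `h` is affine with linear part `M ↦ A M Aᵀ`, so the difference of its `T`-th
iterates at two points is that difference conjugated by `A ^ T`. For the measurement update,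
write `S_X = C X Cᵀ + R`; the resolvent identity `S_Y⁻¹ - S_X⁻¹ = S_Y⁻¹ C (X - Y) Cᵀ S_X⁻¹` is
exactly what makes `g̃ X - g̃ Y` factor as `(1 - K_Y C) (X - Y) (1 - K_X C)ᵀ`, once the symmetry of
`X` and `R` turns `(K_X C)ᵀ` into `Cᵀ S_X⁻¹ C X`.
-/

open Matrix

theorem iterate_sub_iterate_of_eq_mul_mul_add {α : Type*} [Ring α] {a b c : α} {f : α → α}
    (hf : ∀ x, f x = a * x * b + c) (k : ℕ) (x y : α) :
    f^[k] x - f^[k] y = a ^ k * (x - y) * b ^ k := by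
  induction k with
  | zero => simp
  | succ k ih =>
    rw [Function.iterate_succ_apply', Function.iterate_succ_apply', hf, hf,
      add_sub_add_right_eq_sub, ← sub_mul, ← mul_sub, ih, pow_succ', pow_succ]
    simp only [mul_assoc]

noncomputable section

namespace Matrix

variable {m p : Type*} [Fintype m] [Fintype p]

theorem sub_sub_sub_eq_one_sub_mul_sub_mul_one_sub {K : Type*} [Ring K] [DecidableEq m]
    (X Y : Matrix m m K) (C : Matrix p m K) {U V : Matrix p p K}
    (hUV : V - U = V * (C * X * Cᵀ - C * Y * Cᵀ) * U) :
    X - X * Cᵀ * U * C * X - (Y - Y * Cᵀ * V * C * Y)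
      = (1 - Y * Cᵀ * V * C) * (X - Y) * (1 - Cᵀ * U * C * X) := by
  have h := congrArg (fun M => Y * Cᵀ * M * (C * X)) hUV
  simp only [Matrix.mul_sub, Matrix.sub_mul, Matrix.mul_one, Matrix.one_mul,
    Matrix.mul_assoc] at h ⊢
  rw [← sub_eq_zero, ← sub_eq_zero.mpr h]
  abel

theorem PosSemidef.isUnit_mul_mul_transpose_add {K : Type*} [Field K] [PartialOrder K]
    [StarRing K] [TrivialStar K] [AddLeftMono K] [DecidableEq p]
    {X : Matrix m m K} (hX : X.PosSemidef) (C : Matrix p m K) {R : Matrix p p K}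
    (hR : R.PosDef) : IsUnit (C * X * Cᵀ + R) := by
  rw [← conjTranspose_eq_transpose_of_trivial]
  exact (PosDef.posSemidef_add (hX.mul_mul_conjTranspose_same C) hR).isUnit

variable {K : Type*} [CommRing K] [DecidableEq p]

def kalmanGain (C : Matrix p m K) (R : Matrix p p K) (X : Matrix m m K) : Matrix m p K :=
  X * Cᵀ * (C * X * Cᵀ + R)⁻¹

def measurementUpdate (C : Matrix p m K) (R : Matrix p p K) (X : Matrix m m K) : Matrix m m K :=
  X - kalmanGain C R X * C * X

theorem measurementUpdate_sub_measurementUpdate [DecidableEq m] {C : Matrix p m K}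
    {R : Matrix p p K} {X Y : Matrix m m K} (hX : X.IsSymm) (hR : R.IsSymm)
    (hSX : IsUnit (C * X * Cᵀ + R)) (hSY : IsUnit (C * Y * Cᵀ + R)) :
    measurementUpdate C R X - measurementUpdate C R Y
      = (1 - kalmanGain C R Y * C) * (X - Y) * (1 - kalmanGain C R X * C)ᵀ := by
  have hSX_symm : (C * X * Cᵀ + R)ᵀ = C * X * Cᵀ + R := by
    rw [transpose_add, transpose_mul, transpose_mul, transpose_transpose, hX.eq, hR.eq,
      Matrix.mul_assoc]
  have hgain : (1 - kalmanGain C R X * C)ᵀ = 1 - Cᵀ * (C * X * Cᵀ + R)⁻¹ * C * X := by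
    rw [kalmanGain, transpose_sub, transpose_one, transpose_mul, transpose_mul, transpose_mul,
      transpose_nonsing_inv, hSX_symm, transpose_transpose, hX.eq]
    simp only [Matrix.mul_assoc]
  have hresolvent := inv_sub_inv (iff_of_true hSY hSX)
  rw [add_sub_add_right_eq_sub] at hresolvent
  rw [hgain, measurementUpdate, measurementUpdate, kalmanGain, kalmanGain]
  exact sub_sub_sub_eq_one_sub_mul_sub_mul_one_sub X Y C hresolvent

end Matrix

end

theorem stmt_12_general {n q : ℕ} (A : Matrix (Fin n) (Fin n) ℝ) (C : Matrix (Fin q) (Fin n) ℝ)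
    (Q : Matrix (Fin n) (Fin n) ℝ)
    (R : Matrix (Fin q) (Fin q) ℝ) (hR : R.PosDef)
    (h gt : Matrix (Fin n) (Fin n) ℝ → Matrix (Fin n) (Fin n) ℝ)
    (hh : ∀ X, h X = A * X * Aᵀ + Q)
    (hgt : ∀ X, gt X = X - X * Cᵀ * (C * X * Cᵀ + R)⁻¹ * C * X)
    (T : ℕ)
    (X Y : Matrix (Fin n) (Fin n) ℝ) (hX : X.PosSemidef) (hY : Y.PosSemidef)
    (KX KY : Matrix (Fin n) (Fin q) ℝ)
    (hKX : KX = X * Cᵀ * (C * X * Cᵀ + R)⁻¹)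
    (hKY : KY = Y * Cᵀ * (C * Y * Cᵀ + R)⁻¹) :
    h^[T] (gt X) - h^[T] (gt Y)
      = A ^ T * ((1 - KY * C) * (X - Y) * (1 - KX * C)ᵀ) * Aᵀ ^ T := by
  have hupdate : gt X - gt Y = (1 - KY * C) * (X - Y) * (1 - KX * C)ᵀ := by
    rw [hgt, hgt, hKX, hKY]
    exact measurementUpdate_sub_measurementUpdate (isHermitian_iff_isSymm.mp hX.isHermitian)
      (isHermitian_iff_isSymm.mp hR.isHermitian) (hX.isUnit_mul_mul_transpose_add C hR)
      (hY.isUnit_mul_mul_transpose_add C hR)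
  rw [iterate_sub_iterate_of_eq_mul_mul_add hh, hupdate]

/-- Difference identity for `Φ_T = h^T ∘ g̃`:
`Φ_T(X) − Φ_T(Y) = A^T (I − K_Y C) (X − Y) (I − K_X C)ᵀ (Aᵀ)^T`. -/
theorem stmt_12 {n q : ℕ} (A : Matrix (Fin n) (Fin n) ℝ) (C : Matrix (Fin q) (Fin n) ℝ)
    (Q : Matrix (Fin n) (Fin n) ℝ) (hQ : Q.PosSemidef)
    (R : Matrix (Fin q) (Fin q) ℝ) (hR : R.PosDef)
    (h gt : Matrix (Fin n) (Fin n) ℝ → Matrix (Fin n) (Fin n) ℝ)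
    (hh : ∀ X, h X = A * X * Aᵀ + Q)
    (hgt : ∀ X, gt X = X - X * Cᵀ * (C * X * Cᵀ + R)⁻¹ * C * X)
    (T : ℕ) (hT : 1 ≤ T)
    (X Y : Matrix (Fin n) (Fin n) ℝ) (hX : X.PosSemidef) (hY : Y.PosSemidef)
    (KX KY : Matrix (Fin n) (Fin q) ℝ)
    (hKX : KX = X * Cᵀ * (C * X * Cᵀ + R)⁻¹)
    (hKY : KY = Y * Cᵀ * (C * Y * Cᵀ + R)⁻¹) :
    h^[T] (gt X) - h^[T] (gt Y)
      = A ^ T * ((1 - KY * C) * (X - Y) * (1 - KX * C)ᵀ) * Aᵀ ^ T :=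
  stmt_12_general A C Q R hR h gt hh hgt T X Y hX hY KX KY hKX hKY
end

section
/- Let T ≥ 1 be an integer and Φ_T = h^T ∘ g̃. For a symmetric positive semidefinite X₀, define the gain sequence K_j = Φ_T^j(X₀) Cᵀ (C Φ_T^j(X₀) Cᵀ + R)⁻¹ and the transition matrix Ψ_l = [A^T (I − K_{l−1} C)] [A^T (I − K_{l−2} C)] ⋯ [A^T (I − K_0 C)]. Then for every l ≥ 1, Φ_T^l(X₀) ≥ Ψ_l X₀ Ψ_lᵀ in the Loewner order. -/
open Matrix

private lemma psd_conjT {m k : ℕ} {X : Matrix (Fin k) (Fin k) ℝ} (hX : X.PosSemidef)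
    (B : Matrix (Fin m) (Fin k) ℝ) : (B * X * Bᵀ).PosSemidef := by
  simpa [Matrix.conjTranspose_eq_transpose_of_trivial] using hX.mul_mul_conjTranspose_same B

private lemma key_identity {n q : ℕ} (C : Matrix (Fin q) (Fin n) ℝ)
    {R : Matrix (Fin q) (Fin q) ℝ} (hR : R.PosDef)
    {X : Matrix (Fin n) (Fin n) ℝ} (hX : X.PosSemidef) :
    (X - X * Cᵀ * (C * X * Cᵀ + R)⁻¹ * C * X) -
      (1 - X * Cᵀ * (C * X * Cᵀ + R)⁻¹ * C) * X *
        (1 - X * Cᵀ * (C * X * Cᵀ + R)⁻¹ * C)ᵀ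
    = (X * Cᵀ * (C * X * Cᵀ + R)⁻¹) * R * (X * Cᵀ * (C * X * Cᵀ + R)⁻¹)ᵀ := by
  set S : Matrix (Fin q) (Fin q) ℝ := C * X * Cᵀ + R with hSdef
  have hS : S.PosDef := Matrix.PosDef.posSemidef_add (psd_conjT hX C) hR
  set Kk : Matrix (Fin n) (Fin q) ℝ := X * Cᵀ * S⁻¹ with hKdef
  have hKS : Kk * S = X * Cᵀ := by
    rw [hKdef, Matrix.mul_assoc,
      Matrix.nonsing_inv_mul S ((Matrix.isUnit_iff_isUnit_det S).1 hS.isUnit), Matrix.mul_one]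
  have key : X * Cᵀ * Kkᵀ = Kk * (C * X * Cᵀ) * Kkᵀ + Kk * R * Kkᵀ := by
    calc X * Cᵀ * Kkᵀ = (Kk * S) * Kkᵀ := by rw [hKS]
      _ = Kk * (C * X * Cᵀ) * Kkᵀ + Kk * R * Kkᵀ := by
          rw [hSdef]
          simp only [Matrix.mul_add, Matrix.add_mul, Matrix.mul_assoc]
  have hexp : (1 - Kk * C) * X * (1 - Kk * C)ᵀ
      = X - Kk * (C * X) - X * Cᵀ * Kkᵀ + Kk * (C * X * Cᵀ) * Kkᵀ := by
    rw [Matrix.transpose_sub, Matrix.transpose_one, Matrix.transpose_mul]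
    simp only [Matrix.mul_sub, Matrix.sub_mul, Matrix.mul_one, Matrix.one_mul, Matrix.mul_assoc]
    abel
  calc (X - X * Cᵀ * S⁻¹ * C * X) - (1 - Kk * C) * X * (1 - Kk * C)ᵀ
      = X * Cᵀ * Kkᵀ - Kk * (C * X * Cᵀ) * Kkᵀ := by
        rw [hexp, hKdef]
        simp only [Matrix.mul_assoc]
        abel
    _ = Kk * R * Kkᵀ := by rw [key]; abel

/-- iterating `h` dominates conjugation by `A^t`. -/
private lemma h_iter {n : ℕ} {A Q : Matrix (Fin n) (Fin n) ℝ} (hQ : Q.PosSemidef)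
    {h : Matrix (Fin n) (Fin n) ℝ → Matrix (Fin n) (Fin n) ℝ}
    (hh : ∀ X, h X = A * X * Aᵀ + Q)
    {X Z : Matrix (Fin n) (Fin n) ℝ} (hX : X.PosSemidef)
    (hXZ : (X - Z).PosSemidef) (t : ℕ) :
    (h^[t] X).PosSemidef ∧ (h^[t] X - A ^ t * Z * (A ^ t)ᵀ).PosSemidef := by
  induction t with
  | zero => simpa using ⟨hX, hXZ⟩
  | succ t ih =>
    rw [Function.iterate_succ_apply', hh]
    constructor
    · exact (psd_conjT ih.1 A).add hQ
    · have heq : A * h^[t] X * Aᵀ + Q - A ^ (t + 1) * Z * (A ^ (t + 1))ᵀ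
          = A * (h^[t] X - A ^ t * Z * (A ^ t)ᵀ) * Aᵀ + Q := by
        rw [pow_succ', Matrix.transpose_mul]
        simp only [Matrix.mul_sub, Matrix.sub_mul, Matrix.mul_assoc]
        abel
      rw [heq]
      exact (psd_conjT ih.2 A).add hQ

/-- Lower bound on the iterates of `Φ_T = h^T ∘ g̃` via the transition matrices
`Ψ_l = [A^T (I − K_{l−1} C)] ⋯ [A^T (I − K_0 C)]`, where `K_j` is the Kalman gain
of `Φ_T^j(X₀)`. -/
theorem stmt_13 {n q : ℕ} (A : Matrix (Fin n) (Fin n) ℝ) (C : Matrix (Fin q) (Fin n) ℝ)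
    (Q : Matrix (Fin n) (Fin n) ℝ) (hQ : Q.PosSemidef)
    (R : Matrix (Fin q) (Fin q) ℝ) (hR : R.PosDef)
    (h gt : Matrix (Fin n) (Fin n) ℝ → Matrix (Fin n) (Fin n) ℝ)
    (hh : ∀ X, h X = A * X * Aᵀ + Q)
    (hgt : ∀ X, gt X = X - X * Cᵀ * (C * X * Cᵀ + R)⁻¹ * C * X)
    (T : ℕ) (hT : 1 ≤ T)
    (X₀ : Matrix (Fin n) (Fin n) ℝ) (hX₀ : X₀.PosSemidef)
    (K : ℕ → Matrix (Fin n) (Fin q) ℝ)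
    (hK : ∀ j : ℕ, K j = (h^[T] ∘ gt)^[j] X₀ * Cᵀ
      * (C * (h^[T] ∘ gt)^[j] X₀ * Cᵀ + R)⁻¹)
    (Ψ : ℕ → Matrix (Fin n) (Fin n) ℝ)
    (hΨ0 : Ψ 0 = 1)
    (hΨ : ∀ l : ℕ, Ψ (l + 1) = A ^ T * (1 - K l * C) * Ψ l) :
    ∀ l : ℕ, 1 ≤ l → ((h^[T] ∘ gt)^[l] X₀ - Ψ l * X₀ * (Ψ l)ᵀ).PosSemidef := by
  suffices H : ∀ l : ℕ, ((h^[T] ∘ gt)^[l] X₀).PosSemidef ∧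
      ((h^[T] ∘ gt)^[l] X₀ - Ψ l * X₀ * (Ψ l)ᵀ).PosSemidef by
    intro l _; exact (H l).2
  intro l
  induction l with
  | zero =>
    constructor
    · simpa using hX₀
    · simpa [hΨ0] using Matrix.PosSemidef.zero
  | succ l ih =>
    obtain ⟨hXpsd, hDpsd⟩ := ih
    set X : Matrix (Fin n) (Fin n) ℝ := (h^[T] ∘ gt)^[l] X₀ with hXdef
    have hstep : (h^[T] ∘ gt)^[l + 1] X₀ = h^[T] (gt X) := by
      rw [Function.iterate_succ_apply']; rfl
    set G : Matrix (Fin n) (Fin n) ℝ := 1 - K l * C with hGdef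
    -- key identity for X
    have hid : gt X - G * X * Gᵀ
        = (K l) * R * (K l)ᵀ := by
      rw [hgt, hGdef, hK l, ← hXdef]
      exact key_identity C hR hXpsd
    -- gt X is psd
    have hgtpsd : (gt X).PosSemidef := by
      have : gt X = (K l) * R * (K l)ᵀ + G * X * Gᵀ := by rw [← hid]; abel
      rw [this]
      exact (psd_conjT hR.posSemidef (K l)).add (psd_conjT hXpsd G)
    -- gt X dominates G (Ψ l X₀ Ψ lᵀ) Gᵀ
    have hdom : (gt X - G * (Ψ l * X₀ * (Ψ l)ᵀ) * Gᵀ).PosSemidef := by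
      have heq : gt X - G * (Ψ l * X₀ * (Ψ l)ᵀ) * Gᵀ
          = (gt X - G * X * Gᵀ) + G * (X - Ψ l * X₀ * (Ψ l)ᵀ) * Gᵀ := by
        simp only [Matrix.mul_sub, Matrix.sub_mul]
        abel
      rw [heq, hid]
      exact (psd_conjT hR.posSemidef (K l)).add (psd_conjT hDpsd G)
    have := (h_iter hQ hh hgtpsd hdom T).2
    have hfin : A ^ T * (G * (Ψ l * X₀ * (Ψ l)ᵀ) * Gᵀ) * (A ^ T)ᵀ
        = Ψ (l + 1) * X₀ * (Ψ (l + 1))ᵀ := by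
      rw [hΨ l, ← hGdef]
      simp only [Matrix.transpose_mul, Matrix.mul_assoc]
    refine ⟨?_, ?_⟩
    · rw [hstep]; exact (h_iter hQ hh hgtpsd hdom T).1
    · rw [hstep, ← hfin]; exact this
end
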